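/- For every z ∈ ℝ, (erf(z))² = 1 − (4/π)·∫₀¹ exp(−z²(y² + 1)) / (y² + 1) dy. -/

import Mathlib

open MeasureTheory Real intervalIntegral

/-- The error function `erf(x) = (2/√π) ∫₀ˣ exp(−t²) dt`. -/
noncomputable def erf (x : ℝ) : ℝ :=
  (2 / Real.sqrt Real.pi) * ∫ t in (0 : ℝ)..x, Real.exp (-t ^ 2)

noncomputable def Ifun (z : ℝ) : ℝ :=
  ∫ y in (0 : ℝ)..1, Real.exp (-z ^ 2 * (y ^ 2 + 1)) / (y ^ 2 + 1)

lemma hasDerivAt_inner (x y : ℝ) :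
    HasDerivAt (fun x : ℝ => Real.exp (-x ^ 2 * (y ^ 2 + 1)) / (y ^ 2 + 1))
      ((-2 * x) * Real.exp (-x ^ 2 * (y ^ 2 + 1))) x := by
  have h1 : HasDerivAt (fun x : ℝ => -x ^ 2 * (y ^ 2 + 1))
      ((-2 * x) * (y ^ 2 + 1)) x := by
    have := ((hasDerivAt_pow 2 x).neg.mul_const (y ^ 2 + 1))
    exact this.congr_deriv (by simp)
  have h2 := (h1.exp).div_const (y ^ 2 + 1)
  refine h2.congr_deriv ?_
  have hy : y ^ 2 + 1 ≠ 0 := by positivity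
  field_simp

lemma hasDerivAt_Ifun (z : ℝ) :
    HasDerivAt Ifun (∫ y in (0 : ℝ)..1, (-2 * z) * Real.exp (-z ^ 2 * (y ^ 2 + 1))) z := by
  have hle : (0:ℝ) ≤ 1 := zero_le_one
  have hrw : ∀ g : ℝ → ℝ, (∫ y in (0:ℝ)..1, g y) = ∫ y in Set.Ioc (0:ℝ) 1, g y :=
    fun g => intervalIntegral.integral_of_le hle
  set μ : Measure ℝ := volume.restrict (Set.Ioc (0:ℝ) 1) with hμ
  have key := _root_.hasDerivAt_integral_of_dominated_loc_of_deriv_le (μ := μ)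
    (F := fun x y => Real.exp (-x ^ 2 * (y ^ 2 + 1)) / (y ^ 2 + 1))
    (F' := fun x y => (-2 * x) * Real.exp (-x ^ 2 * (y ^ 2 + 1)))
    (x₀ := z) (bound := fun _ => 2 * (|z| + 1)) (Metric.ball_mem_nhds z one_pos)
    ?_ ?_ ?_ ?_ ?_ ?_
  · have heq : Ifun = fun x => ∫ a, Real.exp (-x ^ 2 * (a ^ 2 + 1)) / (a ^ 2 + 1) ∂μ :=
      funext fun x => hrw _
    rw [heq, hrw]
    exact key.2
  · filter_upwards with x
    exact (Continuous.div (by continuity) (by continuity)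
      (fun y => by positivity)).aestronglyMeasurable
  · apply Integrable.mono_measure ?_ (Measure.restrict_mono Set.Ioc_subset_Icc_self le_rfl)
    exact (Continuous.div (by continuity) (by continuity)
      (fun y => by positivity)).integrableOn_Icc.integrable
  · exact (Continuous.mul (by continuity) (by continuity)).aestronglyMeasurable
  · filter_upwards with y
    intro x hx
    have hx' : |x| < |z| + 1 := by
      have := abs_sub_abs_le_abs_sub x z
      have h2 : |x - z| < 1 := by simpa [Real.dist_eq] using hx
      linarith
    have hexp : Real.exp (-x ^ 2 * (y ^ 2 + 1)) ≤ 1 := by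
      apply Real.exp_le_one_iff.2
      nlinarith [sq_nonneg x, sq_nonneg y]
    have hexp0 : 0 < Real.exp (-x ^ 2 * (y ^ 2 + 1)) := Real.exp_pos _
    rw [Real.norm_eq_abs, abs_mul, abs_mul]
    calc |(-2:ℝ)| * |x| * |Real.exp (-x ^ 2 * (y ^ 2 + 1))|
        ≤ 2 * (|z| + 1) * 1 := by
          rw [abs_of_pos hexp0]
          apply mul_le_mul (by rw [abs_neg, abs_two]; nlinarith [abs_nonneg x]) hexp
            hexp0.le (by positivity)
      _ = 2 * (|z| + 1) := by ring
  · exact integrableOn_const measure_Ioc_lt_top.ne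
  · filter_upwards with y
    intro x _
    exact hasDerivAt_inner x y

lemma hasDerivAt_erfInt (z : ℝ) :
    HasDerivAt (fun x : ℝ => ∫ t in (0:ℝ)..x, Real.exp (-t ^ 2)) (Real.exp (-z ^ 2)) z :=
  ((Continuous.integral_hasStrictDerivAt (by continuity) 0 z)).hasDerivAt

lemma subst_lemma (z : ℝ) :
    (∫ y in (0:ℝ)..1, z * Real.exp (-(z * y) ^ 2)) = ∫ t in (0:ℝ)..z, Real.exp (-t ^ 2) := by
  have := intervalIntegral.mul_integral_comp_mul_left
    (f := fun t => Real.exp (-t ^ 2)) (a := (0:ℝ)) (b := 1) (c := z)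
  rw [mul_zero, mul_one] at this
  rw [← this, intervalIntegral.integral_const_mul]

/-- For every `z ∈ ℝ`,
`(erf z)² = 1 − (4/π)·∫₀¹ exp(−z²(y² + 1))/(y² + 1) dy`. -/
theorem purity_stmt8 (z : ℝ) :
    (erf z) ^ 2
      = 1 - (4 / Real.pi) *
          ∫ y in (0 : ℝ)..1, Real.exp (-z ^ 2 * (y ^ 2 + 1)) / (y ^ 2 + 1) := by
  have hπ : (0:ℝ) < Real.pi := Real.pi_pos
  have hsq : Real.sqrt Real.pi * Real.sqrt Real.pi = Real.pi := Real.mul_self_sqrt hπ.le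
  have hsπ : Real.sqrt Real.pi ≠ 0 := by positivity
  set G : ℝ → ℝ := fun x => (erf x) ^ 2 + (4 / Real.pi) * Ifun x with hG
  have hderiv : ∀ x, HasDerivAt G 0 x := by
    intro x
    have h1 : HasDerivAt (fun x => (erf x) ^ 2)
        (2 * erf x * ((2 / Real.sqrt Real.pi) * Real.exp (-x ^ 2))) x := by
      have he : HasDerivAt erf ((2 / Real.sqrt Real.pi) * Real.exp (-x ^ 2)) x :=
        ((hasDerivAt_erfInt x).const_mul (2 / Real.sqrt Real.pi))
      have := he.mul he
      simp only [← pow_two] at this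
      exact this.congr_deriv (by ring)
    have h2 := (hasDerivAt_Ifun x).const_mul (4 / Real.pi)
    have hval : (4 / Real.pi) * (∫ y in (0:ℝ)..1, (-2 * x) * Real.exp (-x ^ 2 * (y ^ 2 + 1)))
        = -(2 * erf x * ((2 / Real.sqrt Real.pi) * Real.exp (-x ^ 2))) := by
      have hsplit : ∀ y : ℝ, (-2 * x) * Real.exp (-x ^ 2 * (y ^ 2 + 1))
          = (-2) * Real.exp (-x ^ 2) * (x * Real.exp (-(x * y) ^ 2)) := by
        intro y
        rw [show -x ^ 2 * (y ^ 2 + 1) = -(x*y) ^ 2 + -x ^ 2 by ring, Real.exp_add]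
        ring
      rw [show (∫ y in (0:ℝ)..1, (-2 * x) * Real.exp (-x ^ 2 * (y ^ 2 + 1)))
          = ∫ y in (0:ℝ)..1, (-2) * Real.exp (-x ^ 2) * (x * Real.exp (-(x * y) ^ 2)) by
            exact intervalIntegral.integral_congr fun y _ => hsplit y]
      rw [intervalIntegral.integral_const_mul, subst_lemma]
      rw [erf]
      field_simp
      rw [Real.sq_sqrt hπ.le]; ring
    have := h1.add h2
    rw [hval] at this
    simp at this; exact this
  have hconst : G z = G 0 := by
    apply is_const_of_deriv_eq_zero (fun x => (hderiv x).differentiableAt)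
    intro x; exact (hderiv x).deriv
  have hG0 : G 0 = 1 := by
    have herf0 : erf 0 = 0 := by simp [erf]
    have hI0 : Ifun 0 = Real.pi / 4 := by
      rw [Ifun]
      have : (∫ y in (0:ℝ)..1, Real.exp (-(0:ℝ) ^ 2 * (y ^ 2 + 1)) / (y ^ 2 + 1))
          = ∫ y in (0:ℝ)..1, 1 / (1 + y ^ 2) := by
        apply intervalIntegral.integral_congr
        intro y _
        norm_num [add_comm]
      rw [this, integral_one_div_one_add_sq]
      simp [Real.arctan_one]
    simp only [hG]
    rw [herf0, hI0]
    field_simp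
    norm_num
  have : G z = 1 := hconst.trans hG0
  rw [hG] at this
  simp only at this
  have hIz : Ifun z = ∫ y in (0 : ℝ)..1, Real.exp (-z ^ 2 * (y ^ 2 + 1)) / (y ^ 2 + 1) := rfl
  rw [hIz] at this
  linarith [this]
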